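/- Let λ < 0. Then there exist real numbers λ₁', λ₂' satisfying -2 - (1/3)|λ|^{1/3} < λ₁' < min{-2, -2 - (|λ|^{2/3} - 1)/(3|λ|^{1/3} + 1)} and -1 < λ₂' < -1 - λ₁'(λ₁' + 2 + (1/3)|λ|^{1/3})/(1 + (1/3)|λ|^{1/3}). Moreover, for all λ₁', λ₂' satisfying these inequalities, the quantities β = -((λ₁' + 1)² + λ₂') / (|λ|^{1/3}(1 + λ₁' + λ₂')) and γ = -|λ|^{1/3}(1 + λ₂') / (1 + λ₁' + λ₂') satisfy 0 < β < 1/3 and 0 < γ < 1/3 (in particular, 1 + λ₁' + λ₂' ≠ 0). -/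
import Mathlib

set_option maxHeartbeats 1000000 in
lemma aux_good_activities (m : ℝ) (hm : 0 < m) :
    (∃ l₁ l₂ : ℝ,
      -2 - (1/3) * m < l₁ ∧
      l₁ < min (-2) (-2 - (m ^ 2 - 1) / (3 * m + 1)) ∧
      -1 < l₂ ∧
      l₂ < -1 - l₁ * (l₁ + 2 + (1/3) * m) / (1 + (1/3) * m)) ∧
    ∀ l₁ l₂ : ℝ,
      (-2 - (1/3) * m < l₁ ∧
      l₁ < min (-2) (-2 - (m ^ 2 - 1) / (3 * m + 1)) ∧
      -1 < l₂ ∧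
      l₂ < -1 - l₁ * (l₁ + 2 + (1/3) * m) / (1 + (1/3) * m)) →
      1 + l₁ + l₂ ≠ 0 ∧
      (0 < -(((l₁ + 1) ^ 2 + l₂) / (m * (1 + l₁ + l₂))) ∧
        -(((l₁ + 1) ^ 2 + l₂) / (m * (1 + l₁ + l₂))) < 1/3) ∧
      (0 < -(m * (1 + l₂) / (1 + l₁ + l₂)) ∧
        -(m * (1 + l₂) / (1 + l₁ + l₂)) < 1/3) := by
  have hm3 : (0:ℝ) < 1 + (1/3) * m := by linarith
  have h3m : (0:ℝ) < 3 * m + 1 := by linarith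
  constructor
  · -- existence
    have hdiv : (m ^ 2 - 1) / (3 * m + 1) < (1/3) * m := by
      rw [div_lt_iff₀ h3m]; nlinarith
    set u : ℝ := min (-2) (-2 - (m ^ 2 - 1) / (3 * m + 1)) with hu
    have hLu : -2 - (1/3) * m < u := lt_min (by linarith) (by linarith)
    set l₁ : ℝ := ((-2 - (1/3) * m) + u) / 2 with hl1
    have hl1a : -2 - (1/3) * m < l₁ := by rw [hl1]; linarith
    have hl1b : l₁ < u := by rw [hl1]; linarith
    have hl1neg : l₁ < -2 := lt_of_lt_of_le hl1b (min_le_left _ _)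
    have hA : 0 < l₁ + 2 + (1/3) * m := by linarith
    have hU2 : -1 < -1 - l₁ * (l₁ + 2 + (1/3) * m) / (1 + (1/3) * m) := by
      have : l₁ * (l₁ + 2 + (1/3) * m) / (1 + (1/3) * m) < 0 :=
        div_neg_of_neg_of_pos (mul_neg_of_neg_of_pos (by linarith) hA) hm3
      linarith
    exact ⟨l₁, (-1 + (-1 - l₁ * (l₁ + 2 + (1/3) * m) / (1 + (1/3) * m))) / 2,
      hl1a, hl1b, by linarith, by linarith⟩
  · rintro l₁ l₂ ⟨h1, hmin, h3, h4⟩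
    have hl1neg : l₁ < -2 := lt_of_lt_of_le hmin (min_le_left _ _)
    have hq : l₁ < -2 - (m ^ 2 - 1) / (3 * m + 1) :=
      lt_of_lt_of_le hmin (min_le_right _ _)
    have hA : 0 < l₁ + 2 + (1/3) * m := by linarith
    have h4'' : l₂ + 1 < -(l₁ * (l₁ + 2 + (1/3) * m)) / (1 + (1/3) * m) := by
      rw [neg_div]; linarith
    have h4' : (l₂ + 1) * (1 + (1/3) * m) < -(l₁ * (l₁ + 2 + (1/3) * m)) :=
      (lt_div_iff₀ hm3).mp h4''
    have hq'' : l₁ + 2 < -(m ^ 2 - 1) / (3 * m + 1) := by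
      rw [neg_div]; linarith
    have hq' : (l₁ + 2) * (3 * m + 1) < -(m ^ 2 - 1) := (lt_div_iff₀ h3m).mp hq''
    have hD : 1 + l₁ + l₂ < 0 := by
      by_contra hcon
      push_neg at hcon
      have h5 := mul_nonneg hm3.le hcon
      have hp := mul_pos (show (0:ℝ) < -l₁ by linarith)
        (show (0:ℝ) < -(l₁ + 1) by linarith)
      nlinarith [h4', h5, hp]
    have hmD : m * (1 + l₁ + l₂) < 0 := mul_neg_of_pos_of_neg hm hD
    have hN : 0 < (l₁ + 1) ^ 2 + l₂ := by
      have hp := mul_pos (show (0:ℝ) < -l₁ by linarith)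
        (show (0:ℝ) < -(l₁ + 2) by linarith)
      nlinarith [hp]
    have hS : 1 + l₁ + l₂ + 3 * m * (1 + l₂) < 0 := by
      have t1 : (1 + 3 * m) * ((l₂ + 1) * (1 + (1/3) * m) + l₁ * (l₁ + 2 + (1/3) * m)) < 0 :=
        mul_neg_of_pos_of_neg (by linarith) (by linarith)
      have t2 : (-l₁) * ((l₁ + 2) * (3 * m + 1) + (m ^ 2 - 1)) < 0 :=
        mul_neg_of_pos_of_neg (by linarith) (by linarith)
      have key : (1 + (1/3) * m) * (1 + l₁ + l₂ + 3 * m * (1 + l₂)) < 0 := by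
        linarith [t1, t2]
      by_contra hcon
      push_neg at hcon
      have h5 := mul_nonneg hm3.le hcon
      linarith [key, h5]
    refine ⟨by intro h; rw [h] at hD; exact lt_irrefl 0 hD, ⟨?_, ?_⟩, ⟨?_, ?_⟩⟩
    · exact neg_pos.mpr (div_neg_of_pos_of_neg hN hmD)
    · rw [← div_neg, div_lt_iff₀ (by linarith : (0:ℝ) < -(m * (1 + l₁ + l₂)))]
      linarith [h4']
    · exact neg_pos.mpr
        (div_neg_of_pos_of_neg (mul_pos hm (by linarith : (0:ℝ) < 1 + l₂)) hD)
    · rw [← div_neg, div_lt_iff₀ (by linarith : (0:ℝ) < -(1 + l₁ + l₂))]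
      linarith [hS]


/-- The condition (16) on the pair `(λ₁', λ₂')` for a given `λ < 0`:
`-2 - (1/3)|λ|^{1/3} < λ₁' < min{-2, -2 - (|λ|^{2/3} - 1)/(3|λ|^{1/3} + 1)}` and
`-1 < λ₂' < -1 - λ₁'(λ₁' + 2 + (1/3)|λ|^{1/3})/(1 + (1/3)|λ|^{1/3})`. -/
def goodPair (lam l₁ l₂ : ℝ) : Prop :=
  -2 - (1/3) * |lam| ^ ((1:ℝ)/3) < l₁ ∧
  l₁ < min (-2) (-2 - (|lam| ^ ((2:ℝ)/3) - 1) / (3 * |lam| ^ ((1:ℝ)/3) + 1)) ∧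
  -1 < l₂ ∧
  l₂ < -1 - l₁ * (l₁ + 2 + (1/3) * |lam| ^ ((1:ℝ)/3)) / (1 + (1/3) * |lam| ^ ((1:ℝ)/3))

/-- Let `λ < 0`. Then there exist reals `λ₁', λ₂'` satisfying the condition `goodPair`,
and for all such `λ₁', λ₂'` the parameters
`β = -((λ₁' + 1)² + λ₂')/(|λ|^{1/3}(1 + λ₁' + λ₂'))` and
`γ = -|λ|^{1/3}(1 + λ₂')/(1 + λ₁' + λ₂')` satisfy `0 < β < 1/3` and `0 < γ < 1/3`
(in particular `1 + λ₁' + λ₂' ≠ 0`). -/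
theorem exists_good_activities (lam : ℝ) (hlam : lam < 0) :
    (∃ l₁ l₂ : ℝ, goodPair lam l₁ l₂) ∧
    ∀ l₁ l₂ : ℝ, goodPair lam l₁ l₂ →
      1 + l₁ + l₂ ≠ 0 ∧
      (0 < -(((l₁ + 1) ^ 2 + l₂) / (|lam| ^ ((1:ℝ)/3) * (1 + l₁ + l₂))) ∧
        -(((l₁ + 1) ^ 2 + l₂) / (|lam| ^ ((1:ℝ)/3) * (1 + l₁ + l₂))) < 1/3) ∧
      (0 < -(|lam| ^ ((1:ℝ)/3) * (1 + l₂) / (1 + l₁ + l₂)) ∧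
        -(|lam| ^ ((1:ℝ)/3) * (1 + l₂) / (1 + l₁ + l₂)) < 1/3) := by
  have hpos : 0 < |lam| := abs_pos.mpr hlam.ne
  have hm : 0 < |lam| ^ ((1:ℝ)/3) := Real.rpow_pos_of_pos hpos _
  have h2 : |lam| ^ ((2:ℝ)/3) = (|lam| ^ ((1:ℝ)/3)) ^ 2 := by
    rw [← Real.rpow_natCast (|lam| ^ ((1:ℝ)/3)) 2,
      ← Real.rpow_mul (abs_nonneg lam)]
    norm_num
  obtain ⟨hex, hall⟩ := aux_good_activities (|lam| ^ ((1:ℝ)/3)) hm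
  constructor
  · obtain ⟨l₁, l₂, c1, c2, c3, c4⟩ := hex
    refine ⟨l₁, l₂, ?_⟩
    unfold goodPair
    rw [h2]
    exact ⟨c1, c2, c3, c4⟩
  · intro l₁ l₂ hgp
    unfold goodPair at hgp
    rw [h2] at hgp
    exact hall l₁ l₂ hgp
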